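/- arXiv:1806.02685 — 5 statements merged into one kernel-verified Lean document; each statement's English description precedes it below -/
import Mathlib

section
/- For all positive integers m and n, the identity Σ_{k=0}^{m} B_{n,k}^2 · B_{m,k} = (1/2)·C(2n,n)^2·C(2m,m)·[ 1 − ((n+2m)/m)·C(n+m,n)^{-2}·Σ_{k=0}^{m-1} C(n+k,n)·C(n+k,n-1) ] holds, where B_{n,k} = (k/n)·C(2n, n−k) and B_{n,0} = 0. (This is Conjecture 4.2 of Miana–Ohtsuka–Romero with r = m and s = n, proved without the restriction r = min{n,m}.) -/
/-!
Both sides satisfy the same first-order recurrence in `m`,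
`X (m + 1) = c m * X m - G 0` with `c m = catRatio n m` and `G = catCert n m`.
For the sum this is creative telescoping: `G` is a Gosper-type certificate with
`F (m + 1) k - c m * F m k = G k - G (k - 1)` for the summand `F m k = B_{n,k}^2 B_{m,k}`,
and `G (m + 1) = 0`. For the right-hand side it is a direct computation.
Since `c 0 = 0`, the recurrence also yields the value at `m = 1`.
-/

/-- The Catalan triangle numbers `B_{n,k} = (k/n) * C(2n, n-k)` (as rationals),
with the convention `B_{n,k} = 0` for `k > n`; in particular `B_{n,0} = 0`. -/
def catB (n k : ℕ) : ℚ :=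
  if k ≤ n then (k : ℚ) / n * ((2 * n).choose (n - k)) else 0

open Finset

section Choose

variable {K : Type*} [Field K] [CharZero K]

theorem Nat.cast_choose_succ_right (N j : ℕ) :
    (N.choose (j + 1) : K) = N.choose j * (N - j) / (j + 1) := by
  rw [eq_div_iff (Nat.cast_add_one_ne_zero j)]
  rcases le_or_gt j N with h | h
  · have := congrArg (Nat.cast : ℕ → K) (Nat.choose_succ_right_eq N j)
    push_cast [Nat.cast_sub h] at this
    exact this
  · simp [Nat.choose_eq_zero_of_lt h, Nat.choose_eq_zero_of_lt (h.trans (Nat.lt_succ_self j))]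

theorem Nat.cast_choose_succ_succ (N j : ℕ) :
    ((N + 1).choose (j + 1) : K) = (N + 1) * N.choose j / (j + 1) := by
  rw [eq_div_iff (Nat.cast_add_one_ne_zero j)]
  exact_mod_cast (Nat.add_one_mul_choose_eq N j).symm

theorem Nat.cast_choose_two_mul_succ (m : ℕ) :
    ((2 * (m + 1)).choose (m + 1) : K) = 2 * (2 * m + 1) * (2 * m).choose m / (m + 1) := by
  rw [eq_div_iff (Nat.cast_add_one_ne_zero m), ← Nat.centralBinom_eq_two_mul_choose,
    ← Nat.centralBinom_eq_two_mul_choose]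
  exact_mod_cast (mul_comm _ _).trans (Nat.succ_mul_centralBinom_succ m)

end Choose

-- `C(2n, n + k)` vanishes for `k > n`, so this form of `catB` needs no case split.
theorem catB_eq_choose_add (n k : ℕ) : catB n k = k / n * (2 * n).choose (n + k) := by
  unfold catB
  split_ifs with h
  · rw [Nat.choose_symm_of_eq_add (by omega : 2 * n = (n - k) + (n + k))]
  · rw [Nat.choose_eq_zero_of_lt (by omega)]
    simp

theorem catB_zero_right (n : ℕ) : catB n 0 = 0 := by simp [catB]

theorem catB_succ_self (m : ℕ) : catB m (m + 1) = 0 := by simp [catB]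

def catSum (n m : ℕ) : ℚ := ∑ k ∈ range (m + 1), catB n k ^ 2 * catB m k

def catSumRhs (n m : ℕ) : ℚ :=
  1 / 2 * ((2 * n).choose n : ℚ) ^ 2 * ((2 * m).choose m : ℚ) *
    (1 - ((n : ℚ) + 2 * m) / m * (((n + m).choose n : ℚ))⁻¹ ^ 2 *
      ∑ k ∈ range m, ((n + k).choose n : ℚ) * ((n + k).choose (n - 1) : ℚ))

def catRatio (n m : ℕ) : ℚ :=
  2 * (2 * m + 1) * (n + 2 * m + 2) * m / ((n + 2 * m) * (n + m + 1) ^ 2)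

def catCert (n m j : ℕ) : ℚ :=
  -((2 * m + 1) * ((n : ℚ) - j) ^ 2 * ((n + 2 * m + 2) * j * (j + 1) + n * (m + 1)) *
      (2 * n).choose (n + j) ^ 2 * (2 * m).choose (m + j)) /
    (n ^ 2 * (n + 2 * m) * (n + m + 1) ^ 2 * (m + j + 1))

theorem catRatio_mul_catB (n m k : ℕ) :
    catRatio n m * catB m k =
      2 * (2 * m + 1) * (n + 2 * m + 2) / ((n + 2 * m) * (n + m + 1) ^ 2) * k *
        (2 * m).choose (m + k) := by
  rcases Nat.eq_zero_or_pos m with rfl | hm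
  · rcases k with _ | k <;> simp [catRatio]
  · rw [catRatio, catB_eq_choose_add]
    field_simp

theorem catCert_succ_sub (n m j : ℕ) (hn : 0 < n) :
    catCert n m (j + 1) - catCert n m j =
      catB n (j + 1) ^ 2 * catB (m + 1) (j + 1) -
        catRatio n m * (catB n (j + 1) ^ 2 * catB m (j + 1)) := by
  have h2n : ((2 * n).choose (n + (j + 1)) : ℚ) =
      (2 * n).choose (n + j) * (n - j) / (n + j + 1) := by
    rw [← add_assoc, Nat.cast_choose_succ_right]; push_cast; ring
  have h2m : ((2 * m).choose (m + (j + 1)) : ℚ) =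
      (2 * m).choose (m + j) * (m - j) / (m + j + 1) := by
    rw [← add_assoc, Nat.cast_choose_succ_right]; push_cast; ring
  have h2m2 : ((2 * (m + 1)).choose (m + 1 + (j + 1)) : ℚ) =
      (2 * m + 2) * (2 * m + 1) * (2 * m).choose (m + j) / ((m + j + 2) * (m + j + 1)) := by
    rw [show 2 * (m + 1) = 2 * m + 1 + 1 by ring, show m + 1 + (j + 1) = m + j + 1 + 1 by ring,
      Nat.cast_choose_succ_succ, Nat.cast_choose_succ_succ]
    push_cast; field_simp; ring
  rw [mul_left_comm, catRatio_mul_catB, catB_eq_choose_add, catB_eq_choose_add]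
  unfold catCert
  rw [h2n, h2m, h2m2]
  push_cast
  field_simp
  ring

theorem catCert_self_succ (n m : ℕ) : catCert n m (m + 1) = 0 := by
  simp [catCert, Nat.choose_eq_zero_of_lt (by omega : 2 * m < m + (m + 1))]

theorem catSum_succ (n m : ℕ) (hn : 0 < n) :
    catSum n (m + 1) = catRatio n m * catSum n m - catCert n m 0 := by
  have hext : catSum n m = ∑ k ∈ range (m + 2), catB n k ^ 2 * catB m k := by
    rw [sum_range_succ, catB_succ_self, mul_zero, add_zero, catSum]
  have htel : catSum n (m + 1) - catRatio n m * catSum n m =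
      ∑ j ∈ range (m + 1), (catCert n m (j + 1) - catCert n m j) := by
    rw [hext, catSum, mul_sum, ← sum_sub_distrib, sum_range_succ']
    simp [catCert_succ_sub n m _ hn, catB_zero_right]
  rw [sum_range_sub, catCert_self_succ] at htel
  linarith

theorem catSumRhs_one (n : ℕ) (hn : 0 < n) : catSumRhs n 1 = -catCert n 0 0 := by
  have hsub : n.choose (n - 1) = n := by
    rw [Nat.choose_symm (by omega), Nat.choose_one_right]
  simp [catSumRhs, catCert, hsub, Nat.choose_succ_self_right]
  field_simp
  ring

theorem catSumRhs_succ (n m : ℕ) (hn : 0 < n) (hm : 0 < m) :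
    catSumRhs n (m + 1) = catRatio n m * catSumRhs n m - catCert n m 0 := by
  have hP : ((n + (m + 1)).choose n : ℚ) = (n + m + 1) * (n + m).choose n / (m + 1) := by
    rw [Nat.choose_symm_add, ← add_assoc, Nat.cast_choose_succ_succ, ← Nat.choose_symm_add]
    push_cast; ring
  have hQ : ((n + m).choose (n - 1) : ℚ) = n * (n + m).choose n / (m + 1) := by
    have h := Nat.choose_succ_right_eq (n + m) (n - 1)
    rw [Nat.sub_add_cancel hn, show n + m - (n - 1) = m + 1 by omega] at h
    have h' : ((n + m).choose (n - 1) : ℚ) * (m + 1) = (n + m).choose n * n := by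
      exact_mod_cast h.symm
    rw [eq_div_iff (by positivity), h', mul_comm]
  have hC : ((2 * n).choose n : ℚ) ≠ 0 := Nat.cast_ne_zero.mpr (Nat.choose_pos (by omega)).ne'
  have hP0 : ((n + m).choose n : ℚ) ≠ 0 := Nat.cast_ne_zero.mpr (Nat.choose_pos (by omega)).ne'
  simp only [catSumRhs, catRatio, catCert, sum_range_succ _ m, Nat.cast_choose_two_mul_succ, hP,
    hQ, add_zero]
  push_cast
  field_simp
  ring

/-- Conjecture 4.2 of Miana–Ohtsuka–Romero with `r = m` and `s = n`
(no restriction `r = min{n,m}`). -/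
theorem stmt0 (m n : ℕ) (hm : 0 < m) (hn : 0 < n) :
    ∑ k ∈ Finset.range (m + 1), catB n k ^ 2 * catB m k =
      1 / 2 * ((2 * n).choose n : ℚ) ^ 2 * ((2 * m).choose m : ℚ) *
        (1 - ((n : ℚ) + 2 * m) / m * (((n + m).choose n : ℚ))⁻¹ ^ 2 *
          ∑ k ∈ Finset.range m, ((n + k).choose n : ℚ) * ((n + k).choose (n - 1) : ℚ)) := by
  obtain ⟨m, rfl⟩ : ∃ k, m = k + 1 := ⟨m - 1, by omega⟩
  change catSum n (m + 1) = catSumRhs n (m + 1)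
  clear hm
  induction m with
  | zero => rw [catSum_succ n 0 hn, catSumRhs_one n hn]; simp [catRatio]
  | succ m ih => rw [catSum_succ n _ hn, catSumRhs_succ n _ hn m.succ_pos, ih]
end

section
/- Let m and n be non-negative integers. Then Σ_{k=1}^{m} C(n+k−2, k−1)·C(n−1, k−1)·C(m+n, m−k) = Σ_{k=0}^{m} k·C(m+n−k−1, n−1)^2. -/
/-!
Write `n = N + 1`, `a j = C(N + j, j) * C(N, j)` and `T r M = ∑_{j ≤ M} a j * C(N + M + r, M - j)`;
the left side is `T 2 (m - 1)`. Pascal's rule turns `T (r + 1)` into the prefix sums of `T r`,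
and trinomial revision followed by Vandermonde's identity gives `T 0 M = C(N + M, M) ^ 2`.
So `T 2 M = ∑_{k ≤ M} (M + 1 - k) * C(N + k, k) ^ 2`, which is the right side read backwards.
-/

/-- Binomial coefficient `C(a, b)` for integers `a`, `b`, with the convention
`C(a, b) = 0` when `b < 0` or `b > a`. -/
def ichoose (a b : ℤ) : ℤ :=
  if 0 ≤ b ∧ b ≤ a then (a.toNat.choose b.toNat : ℤ) else 0

open Finset

lemma ichoose_natCast (a b : ℕ) : ichoose a b = (a.choose b : ℤ) := by
  unfold ichoose
  split_ifs with h
  · simp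
  · simp [Nat.choose_eq_zero_of_lt (show a < b by omega)]

lemma ichoose_of_lt {a b : ℤ} (h : a < b) : ichoose a b = 0 :=
  if_neg (by omega)

lemma ichoose_of_neg {a b : ℤ} (h : b < 0) : ichoose a b = 0 :=
  if_neg (by omega)

lemma Nat.sum_range_choose_mul_choose (N M : ℕ) :
    ∑ j ∈ range (M + 1), N.choose j * M.choose j = (N + M).choose M := by
  rw [Nat.add_choose_eq, Nat.sum_antidiagonal_eq_sum_range_succ (fun i j => N.choose i * M.choose j)]
  refine sum_congr rfl fun j hj => ?_
  rw [Nat.choose_symm (mem_range_succ_iff.mp hj)]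

lemma Nat.add_choose_mul_choose_sub (N M j : ℕ) (hj : j ≤ M) :
    (N + j).choose j * (N + M).choose (M - j) = (N + M).choose N * M.choose j := by
  have h := Nat.choose_mul (n := N + M) (k := N + j) (s := N) (by omega)
  rw [Nat.add_sub_cancel_left, Nat.add_sub_cancel_left] at h
  rw [← Nat.choose_symm_add, Nat.choose_symm_of_eq_add (by omega : N + M = (M - j) + (N + j)),
    mul_comm, h]

theorem Finset.sum_range_sum_range_succ {M : Type*} [AddCommMonoid M] (f : ℕ → M) (n : ℕ) :
    ∑ i ∈ range n, ∑ k ∈ range (i + 1), f k = ∑ k ∈ range n, (n - k) • f k := by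
  induction n with
  | zero => simp
  | succ n ih =>
    rw [sum_range_succ, ih, sum_range_succ f n, sum_range_succ (fun k => (n + 1 - k) • f k),
      Nat.add_sub_cancel_left, one_smul, ← add_assoc, ← sum_add_distrib]
    refine congrArg (· + f n) (sum_congr rfl fun k hk => ?_)
    rw [Nat.sub_add_comm (mem_range.mp hk).le, succ_nsmul]

def binomConv (a : ℕ → ℕ) (c r M : ℕ) : ℕ :=
  ∑ j ∈ range (M + 1), a j * (c + M + r).choose (M - j)

theorem binomConv_succ (a : ℕ → ℕ) (c r M : ℕ) :
    binomConv a c (r + 1) M = ∑ i ∈ range (M + 1), binomConv a c r i := by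
  induction M with
  | zero => simp [binomConv]
  | succ M ih =>
    rw [sum_range_succ, ← ih]
    unfold binomConv
    have pascal : ∀ j ∈ range (M + 1), a j * (c + (M + 1) + (r + 1)).choose (M + 1 - j) =
        a j * (c + M + (r + 1)).choose (M - j) + a j * (c + (M + 1) + r).choose (M + 1 - j) := by
      intro j hj
      have hj := mem_range.mp hj
      rw [show M + 1 - j = M - j + 1 by omega, show c + M + (r + 1) = c + (M + 1) + r by ring,
        ← mul_add, ← Nat.choose_succ_succ']
      rfl
    rw [sum_range_succ, sum_range_succ (fun j => a j * (c + (M + 1) + r).choose (M + 1 - j)),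
      sum_congr rfl pascal, sum_add_distrib]
    simp only [Nat.sub_self, Nat.choose_zero_right]
    ring

theorem binomConv_zero (N M : ℕ) :
    binomConv (fun j => (N + j).choose j * N.choose j) N 0 M = (N + M).choose M ^ 2 := by
  unfold binomConv
  calc ∑ j ∈ range (M + 1), (N + j).choose j * N.choose j * (N + M + 0).choose (M - j)
      = ∑ j ∈ range (M + 1), (N + M).choose N * (N.choose j * M.choose j) := by
        refine sum_congr rfl fun j hj => ?_
        rw [add_zero, mul_right_comm,
          Nat.add_choose_mul_choose_sub N M j (mem_range_succ_iff.mp hj)]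
        ring
    _ = (N + M).choose M ^ 2 := by
        rw [← mul_sum, Nat.sum_range_choose_mul_choose, Nat.choose_symm_add, sq]

theorem binomConv_two (N M : ℕ) :
    binomConv (fun j => (N + j).choose j * N.choose j) N 2 M =
      ∑ k ∈ range (M + 1), (M + 1 - k) * (N + k).choose k ^ 2 := by
  simp only [binomConv_succ, binomConv_zero, sum_range_sum_range_succ, smul_eq_mul]

theorem sum_Icc_ichoose_eq_binomConv (M N : ℕ) :
    ∑ k ∈ Icc 1 (M + 1), ichoose (((N + 1 : ℕ) : ℤ) + k - 2) ((k : ℤ) - 1) *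
        ichoose (((N + 1 : ℕ) : ℤ) - 1) ((k : ℤ) - 1) *
        ichoose (((M + 1 : ℕ) : ℤ) + ((N + 1 : ℕ) : ℤ)) (((M + 1 : ℕ) : ℤ) - k) =
      binomConv (fun j => (N + j).choose j * N.choose j) N 2 M := by
  rw [← Ico_add_one_right_eq_Icc, sum_Ico_eq_sum_range, Nat.add_sub_cancel, binomConv,
    Nat.cast_sum]
  refine sum_congr rfl fun j hj => ?_
  have hj := mem_range.mp hj
  have e1 : ((N + 1 : ℕ) : ℤ) + ((1 + j : ℕ) : ℤ) - 2 = ((N + j : ℕ) : ℤ) := by push_cast; ring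
  have e2 : ((1 + j : ℕ) : ℤ) - 1 = (j : ℤ) := by push_cast; ring
  have e3 : ((N + 1 : ℕ) : ℤ) - 1 = (N : ℤ) := by push_cast; ring
  have e4 : ((M + 1 : ℕ) : ℤ) + ((N + 1 : ℕ) : ℤ) = ((N + M + 2 : ℕ) : ℤ) := by push_cast; ring
  have e5 : ((M + 1 : ℕ) : ℤ) - ((1 + j : ℕ) : ℤ) = ((M - j : ℕ) : ℤ) := by push_cast; omega
  rw [e1, e2, e3, e4, e5, ichoose_natCast, ichoose_natCast, ichoose_natCast]
  push_cast
  ring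

theorem sum_range_mul_ichoose_sq_eq (M N : ℕ) :
    ∑ k ∈ range (M + 1 + 1), (k : ℤ) *
        ichoose (((M + 1 : ℕ) : ℤ) + ((N + 1 : ℕ) : ℤ) - k - 1) (((N + 1 : ℕ) : ℤ) - 1) ^ 2 =
      ((∑ k ∈ range (M + 1), (M + 1 - k) * (N + k).choose k ^ 2 : ℕ) : ℤ) := by
  rw [sum_range_succ', ← sum_range_reflect _ (M + 1), Nat.cast_sum]
  simp only [CharP.cast_eq_zero, zero_mul, add_zero]
  refine sum_congr rfl fun k hk => ?_
  have hk := mem_range.mp hk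
  have e1 : ((M + 1 : ℕ) : ℤ) + ((N + 1 : ℕ) : ℤ) - ((M + 1 - 1 - k + 1 : ℕ) : ℤ) - 1 =
      ((N + k : ℕ) : ℤ) := by push_cast; omega
  have e2 : ((N + 1 : ℕ) : ℤ) - 1 = (N : ℤ) := by push_cast; ring
  rw [e1, e2, ichoose_natCast, Nat.choose_symm_add]
  push_cast
  congr 1
  omega

/-- Theorem 1.3 of the paper. -/
theorem stmt3 (m n : ℕ) :
    ∑ k ∈ Finset.Icc 1 m, ichoose ((n : ℤ) + k - 2) ((k : ℤ) - 1) *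
        ichoose ((n : ℤ) - 1) ((k : ℤ) - 1) * ichoose ((m : ℤ) + n) ((m : ℤ) - k) =
      ∑ k ∈ Finset.range (m + 1), (k : ℤ) *
        ichoose ((m : ℤ) + n - k - 1) ((n : ℤ) - 1) ^ 2 := by
  obtain _ | N := n
  · refine (sum_eq_zero fun k _ => ?_).trans (sum_eq_zero fun k _ => ?_).symm
    · rw [ichoose_of_lt (by omega), zero_mul, zero_mul]
    · rw [ichoose_of_neg (by simp), zero_pow two_ne_zero, mul_zero]
  obtain _ | M := m
  · simp
  rw [sum_Icc_ichoose_eq_binomConv, sum_range_mul_ichoose_sq_eq, binomConv_two]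
end

section
/- For all positive integers m and n, n·C(2n,n)·Σ_{k=0}^{m-1} C(n+k, n)·C(n+k, n−1) = m·C(n+m, n)·Σ_{k=0}^{n-1} C(m+k, m)·C(n+k, n−1). -/
lemma key24 (m n k : ℕ) (hn : 0 < n) :
    (m + 1) * (n + m + 1).choose n * ((m + k + 1).choose (m + 1) * (n + k).choose (n - 1))
      + k * ((m + n).choose (n - 1) * ((m + k).choose m * (n + k).choose n))
    = m * (n + m).choose n * ((m + k).choose m * (n + k).choose (n - 1))
      + (k + 1) * ((m + n).choose (n - 1) * ((m + k + 1).choose m * (n + k + 1).choose n)) := by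
  obtain ⟨p, rfl⟩ : ∃ p, n = p + 1 := ⟨n - 1, by omega⟩
  simp only [Nat.add_sub_cancel]
  have ra : (m + k + 1).choose (m + 1) * (m + 1) = (m + k).choose m * (m + k + 1) := by
    have h := Nat.add_one_mul_choose_eq (m + k) m
    rw [← h, mul_comm]
  have rb : (p + 1 + m + 1).choose (p + 1) * (m + 1) = (p + 1 + m).choose (p + 1) * (p + 1 + m + 1) := by
    have h := Nat.add_one_mul_choose_eq (p + 1 + m) m
    have s1 : (p + 1 + m + 1).choose (p + 1) = (p + 1 + m + 1).choose (m + 1) := by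
      rw [show p + 1 + m + 1 = (p + 1) + (m + 1) by omega, Nat.choose_symm_add]
    have s2 : (p + 1 + m).choose m = (p + 1 + m).choose (p + 1) := by
      rw [show p + 1 + m = (p + 1) + m by omega, Nat.choose_symm_add]
    rw [s1, ← h, s2, mul_comm]
  have rc : (p + 1 + k).choose p * (k + 1) = (p + 1 + k).choose (p + 1) * (p + 1) := by
    have h := Nat.choose_succ_right_eq (p + 1 + k) p
    rw [show p + 1 + k - p = k + 1 by omega] at h
    rw [← h]
  have rd : (m + k + 1).choose m * (k + 1) = (m + k).choose m * (m + k + 1) := by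
    have h := Nat.add_one_mul_choose_eq (m + k) k
    have s1 : (m + k + 1).choose m = (m + k + 1).choose (k + 1) := by
      rw [show m + k + 1 = m + (k + 1) by omega, Nat.choose_symm_add]
    have s2 : (m + k).choose k = (m + k).choose m := Nat.choose_symm_add.symm
    rw [s1, ← h, s2, mul_comm]
  have re : (p + 1 + k + 1).choose (p + 1) * (k + 1) = (p + 1 + k).choose (p + 1) * (p + 1 + k + 1) := by
    have h := Nat.add_one_mul_choose_eq (p + 1 + k) k
    have s1 : (p + 1 + k + 1).choose (p + 1) = (p + 1 + k + 1).choose (k + 1) := by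
      rw [show p + 1 + k + 1 = (p + 1) + (k + 1) by omega, Nat.choose_symm_add]
    have s2 : (p + 1 + k).choose k = (p + 1 + k).choose (p + 1) := by
      rw [show p + 1 + k = (p + 1) + k by omega]; exact Nat.choose_symm_add.symm
    rw [s1, ← h, s2, mul_comm]
  have rf : (m + (p + 1)).choose p * (m + 1) = (p + 1 + m).choose (p + 1) * (p + 1) := by
    have h := Nat.choose_succ_right_eq (m + (p + 1)) p
    rw [show m + (p + 1) - p = m + 1 by omega] at h
    rw [← h, show m + (p + 1) = p + 1 + m by omega]
  have h1 : ((m : ℚ) + 1) ≠ 0 := by positivity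
  have h2 : ((k : ℚ) + 1) ≠ 0 := by positivity
  qify
  have Ra : ((m + k + 1).choose (m + 1) : ℚ)
      = (m + k).choose m * (m + k + 1) / (m + 1) := by
    rw [eq_div_iff h1]; exact_mod_cast ra
  have Rb : ((p + 1 + m + 1).choose (p + 1) : ℚ)
      = (p + 1 + m).choose (p + 1) * (p + 1 + m + 1) / (m + 1) := by
    rw [eq_div_iff h1]; exact_mod_cast rb
  have Rc : ((p + 1 + k).choose p : ℚ)
      = (p + 1 + k).choose (p + 1) * (p + 1) / (k + 1) := by
    rw [eq_div_iff h2]; exact_mod_cast rc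
  have Rd : ((m + k + 1).choose m : ℚ)
      = (m + k).choose m * (m + k + 1) / (k + 1) := by
    rw [eq_div_iff h2]; exact_mod_cast rd
  have Re : ((p + 1 + k + 1).choose (p + 1) : ℚ)
      = (p + 1 + k).choose (p + 1) * (p + 1 + k + 1) / (k + 1) := by
    rw [eq_div_iff h2]; exact_mod_cast re
  have Rf : ((m + (p + 1)).choose p : ℚ)
      = (p + 1 + m).choose (p + 1) * (p + 1) / (m + 1) := by
    rw [eq_div_iff h1]; exact_mod_cast rf
  rw [Ra, Rb, Rc, Rd, Re, Rf]
  field_simp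
  ring

lemma step24 (m n : ℕ) (hn : 0 < n) :
    (m + 1) * (n + (m + 1)).choose n *
        ∑ k ∈ Finset.range n, (m + 1 + k).choose (m + 1) * (n + k).choose (n - 1)
    = m * (n + m).choose n *
        ∑ k ∈ Finset.range n, (m + k).choose m * (n + k).choose (n - 1)
      + n * (2 * n).choose n * ((n + m).choose n * (n + m).choose (n - 1)) := by
  set f : ℕ → ℕ := fun j => j * ((m + n).choose (n - 1) * ((m + j).choose m * (n + j).choose n))
    with hf
  have hsum : ∑ k ∈ Finset.range n,
        ((m + 1) * (n + m + 1).choose n * ((m + k + 1).choose (m + 1) * (n + k).choose (n - 1))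
          + f k)
      = ∑ k ∈ Finset.range n,
        (m * (n + m).choose n * ((m + k).choose m * (n + k).choose (n - 1)) + f (k + 1)) :=
    Finset.sum_congr rfl fun k _ => key24 m n k hn
  rw [Finset.sum_add_distrib, Finset.sum_add_distrib] at hsum
  have htel : ∑ k ∈ Finset.range n, f (k + 1) + f 0 = ∑ k ∈ Finset.range n, f k + f n := by
    have h1 := Finset.sum_range_succ' f n
    have h2 := Finset.sum_range_succ f n
    omega
  have hf0 : f 0 = 0 := by simp [hf]
  have hfn : f n = n * (2 * n).choose n * ((n + m).choose n * (n + m).choose (n - 1)) := by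
    have e1 : (m + n).choose m = (n + m).choose n := by
      rw [Nat.choose_symm_add, show m + n = n + m by omega]
    simp only [hf]
    rw [e1, show n + n = 2 * n by omega, show m + n = n + m by omega]
    ring
  have key : ∑ k ∈ Finset.range n,
        (m + 1) * (n + m + 1).choose n * ((m + k + 1).choose (m + 1) * (n + k).choose (n - 1))
      = ∑ k ∈ Finset.range n,
        m * (n + m).choose n * ((m + k).choose m * (n + k).choose (n - 1)) + f n := by
    omega
  rw [Finset.mul_sum, Finset.mul_sum]
  calc ∑ k ∈ Finset.range n,
        (m + 1) * (n + (m + 1)).choose n * ((m + 1 + k).choose (m + 1) * (n + k).choose (n - 1))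
      = ∑ k ∈ Finset.range n,
        (m + 1) * (n + m + 1).choose n * ((m + k + 1).choose (m + 1) * (n + k).choose (n - 1)) := by
        refine Finset.sum_congr rfl fun k _ => ?_
        rw [show m + 1 + k = m + k + 1 by omega, show n + (m + 1) = n + m + 1 by omega]
    _ = ∑ k ∈ Finset.range n,
        m * (n + m).choose n * ((m + k).choose m * (n + k).choose (n - 1)) + f n := key
    _ = _ := by rw [hfn]

/-- Equation (2.4) of the paper: the two closed forms for `∑ B_{n,k}² B_{m,k}` agree. -/
theorem stmt4 (m n : ℕ) (hm : 0 < m) (hn : 0 < n) :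
    n * (2 * n).choose n *
        ∑ k ∈ Finset.range m, (n + k).choose n * (n + k).choose (n - 1) =
      m * (n + m).choose n *
        ∑ k ∈ Finset.range n, (m + k).choose m * (n + k).choose (n - 1) := by
  clear hm
  induction m with
  | zero => simp
  | succ M ih =>
    rw [Finset.sum_range_succ, Nat.mul_add, ih, step24 M n hn]
end

section
/- For all positive integers m and n, Σ_{k=0}^{n-1} [ (n+k+1)·m + (n+1)·(k+1) ]·C(m+k, m)·C(n+k, n−1) = n·(m+1)·C(n+m, n−1)·C(2n, n). -/
lemma stmt5_aux (m n : ℕ) (hn : 0 < n) : ∀ N : ℕ,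
    ∑ k ∈ Finset.range N,
        ((n + k + 1) * m + (n + 1) * (k + 1)) * (m + k).choose m * (n + k).choose (n - 1) =
      n * N * (m + N).choose m * (n + N).choose n := by
  intro N
  induction N with
  | zero => simp
  | succ N ih =>
    rw [Finset.sum_range_succ, ih]
    have h1 : (N + 1) * (m + N + 1).choose m = (m + N + 1) * (m + N).choose m := by
      have hs : (m + N + 1).choose m = (m + N + 1).choose (N + 1) := by
        have := Nat.choose_symm (show m ≤ m + N + 1 by omega)
        rw [show m + N + 1 - m = N + 1 by omega] at this
        exact this.symm
      have hA : (m + N).choose m = (m + N).choose N := by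
        have := Nat.choose_symm (show m ≤ m + N by omega)
        rw [show m + N - m = N by omega] at this
        exact this.symm
      have hmul := Nat.add_one_mul_choose_eq (m + N) N
      rw [hs, hA]
      linarith [hmul]
    have h2 : (N + 1) * (n + N + 1).choose n = (n + N + 1) * (n + N).choose n := by
      have hs : (n + N + 1).choose n = (n + N + 1).choose (N + 1) := by
        have := Nat.choose_symm (show n ≤ n + N + 1 by omega)
        rw [show n + N + 1 - n = N + 1 by omega] at this
        exact this.symm
      have hB : (n + N).choose n = (n + N).choose N := by
        have := Nat.choose_symm (show n ≤ n + N by omega)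
        rw [show n + N - n = N by omega] at this
        exact this.symm
      have hmul := Nat.add_one_mul_choose_eq (n + N) N
      rw [hs, hB]
      linarith [hmul]
    have h3 : (N + 1) * (n + N).choose (n - 1) = n * (n + N).choose n := by
      have hs : (n + N).choose (n - 1) = (n + N).choose (N + 1) := by
        have := Nat.choose_symm (show n - 1 ≤ n + N by omega)
        rw [show n + N - (n - 1) = N + 1 by omega] at this
        exact this.symm
      have hB : (n + N).choose n = (n + N).choose N := by
        have := Nat.choose_symm (show n ≤ n + N by omega)
        rw [show n + N - n = N by omega] at this
        exact this.symm
      have hmul := Nat.choose_succ_right_eq (n + N) N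
      rw [show n + N - N = n by omega] at hmul
      rw [hs, hB]
      linarith [hmul]
    have e1 : m + (N + 1) = m + N + 1 := by omega
    have e2 : n + (N + 1) = n + N + 1 := by omega
    rw [e1, e2]
    zify at h1 h2 h3 ⊢
    have hpos : ((N : ℤ) + 1) * ((N : ℤ) + 1) ≠ 0 := by positivity
    apply mul_left_cancel₀ hpos
    linear_combination (norm := (push_cast; ring1)) ((((n : ℤ) + N + 1) * m + ((n : ℤ) + 1) * (N + 1)) * ((N : ℤ) + 1) *
        (((m + N).choose m : ℕ) : ℤ)) * h3
      - ((n : ℤ) * ((N : ℤ) + 1) * ((N : ℤ) + 1) * (((n + N + 1).choose n : ℕ) : ℤ)) * h1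
      - ((n : ℤ) * ((N : ℤ) + 1) * ((m : ℤ) + N + 1) * (((m + N).choose m : ℕ) : ℤ)) * h2

/-- The denominator-cleared form of equation (2.5) of the paper, provable by
Gosper's algorithm. -/
theorem stmt5 (m n : ℕ) (hm : 0 < m) (hn : 0 < n) :
    ∑ k ∈ Finset.range n,
        ((n + k + 1) * m + (n + 1) * (k + 1)) * (m + k).choose m * (n + k).choose (n - 1) =
      n * (m + 1) * (n + m).choose (n - 1) * (2 * n).choose n := by
  rw [stmt5_aux m n hn n]
  have hfin : (m + 1) * (n + m).choose (n - 1) = n * (n + m).choose m := by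
    have hs : (n + m).choose (n - 1) = (n + m).choose (m + 1) := by
      have := Nat.choose_symm (show n - 1 ≤ n + m by omega)
      rw [show n + m - (n - 1) = m + 1 by omega] at this
      exact this.symm
    have hmul := Nat.choose_succ_right_eq (n + m) m
    rw [show n + m - m = n by omega] at hmul
    rw [hs]
    linarith [hmul]
  have h2n : (n + n).choose n = (2 * n).choose n := by ring_nf
  rw [show m + n = n + m by ring, h2n]
  calc n * n * (n + m).choose m * (2 * n).choose n
      = n * (n * (n + m).choose m) * (2 * n).choose n := by ring
    _ = n * ((m + 1) * (n + m).choose (n - 1)) * (2 * n).choose n := by rw [hfin]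
    _ = n * (m + 1) * (n + m).choose (n - 1) * (2 * n).choose n := by ring
end

section
/- Let n be a positive integer and let a, r be non-negative integers with a ≤ n. Then the binomial coefficient C(2n, n−a) divides the integer Σ_{k=a}^{n} A_{n,k}^{2r+1}, where A_{n,k} = ((2k+1)/(2n+1))·C(2n+1, n−k). -/
/-!
The sum is the value at `q = 1` of its `q`-analogue `∑_{k=a}^n A_{n,k}(q)^{2r+1}` with
`A_{n,k}(q) = q^{k²} [2n, n-k]_q - q^{(k+1)²} [2n, n+k+1]_q`, so it suffices that the Gaussian
binomial `[2n, n-a]_q` divides this polynomial. Since `[s+t, s]_q` is the product of those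
cyclotomic polynomials `Φ_d` for which adding `s` and `t` in base `d` carries out of the last
digit, it is enough that the `q`-sum vanishes at a primitive `d`-th root of unity `ζ` for each
such `d`. By the `q`-Lucas theorem, at `ζ` the summand with `j = n - k` factors as
`C(⌊2n/d⌋, ⌊j/d⌋) · τ(j mod d)`, where `τ` is supported on `[0, R+1]` (`R = 2n mod d`)
and is odd under `v ↦ R + 1 - v`. So every complete block of `d` consecutive `j` contributes
nothing to the sum of odd powers, and the carry condition says exactly that the final
incomplete block covers the whole support of `τ`.
-/

/-- The Catalan triangle numbers `A_{n,k} = ((2k+1)/(2n+1)) * C(2n+1, n-k)`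
(as rationals), with the convention `A_{n,k} = 0` for `k > n`; these are in
fact integers. -/
def catA (n k : ℕ) : ℚ :=
  if k ≤ n then (2 * (k : ℚ) + 1) / (2 * (n : ℚ) + 1) * ((2 * n + 1).choose (n - k)) else 0

open Polynomial Finset

lemma sum_range_mul_add_eq_zero {M : Type*} [NonUnitalNonAssocSemiring M] {f a b : ℕ → M}
    {d : ℕ} (hf : ∀ q v, v < d → f (d * q + v) = a q * b v) (hbd : ∑ v ∈ range d, b v = 0)
    (w : ℕ) {c : ℕ} (hcd : c ≤ d) (hbc : ∑ v ∈ range c, b v = 0) :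
    ∑ j ∈ range (d * w + c), f j = 0 := by
  have block (q c : ℕ) (hcd : c ≤ d) :
      ∑ j ∈ range (d * q + c), f j =
        ∑ j ∈ range (d * q), f j + a q * ∑ v ∈ range c, b v := by
    rw [sum_range_add, mul_sum]
    exact congrArg _ (sum_congr rfl fun v hv => hf q v (by simp at hv; omega))
  have full (q : ℕ) : ∑ j ∈ range (d * q), f j = 0 := by
    induction q with
    | zero => simp
    | succ q ih => rw [mul_add_one, block q d le_rfl, ih, hbd, mul_zero, add_zero]
  rw [block w c hcd, full, hbc, mul_zero, add_zero]

lemma IsPrimitiveRoot.zpow_eq_zpow_of_dvd_sub {K : Type*} [Field K] {ζ : K} {d : ℕ}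
    (hζ : IsPrimitiveRoot ζ d) (hd : 0 < d) {a b : ℤ} (h : (d : ℤ) ∣ a - b) :
    ζ ^ a = ζ ^ b := by
  rw [← sub_add_cancel a b, zpow_add₀ (hζ.ne_zero hd.ne'), (hζ.zpow_eq_one_iff_dvd _).mpr h,
    one_mul]

lemma isRelPrime_cyclotomic {d e : ℕ} (hd : 0 < d) (he : 0 < e) (hde : d ≠ e) :
    IsRelPrime (cyclotomic d ℤ) (cyclotomic e ℤ) := by
  refine (cyclotomic.irreducible hd).isRelPrime_iff_not_dvd.mpr fun h => hde ?_
  exact cyclotomic_injective (eq_of_monic_of_associated (cyclotomic.monic d ℤ)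
    (cyclotomic.monic e ℤ) ((cyclotomic.irreducible hd).associated_of_dvd
      (cyclotomic.irreducible he) h))

lemma cyclotomic_dvd_of_aeval_eq_zero {K : Type*} [Field K] [CharZero K] {ζ : K} {d : ℕ}
    (hζ : IsPrimitiveRoot ζ d) (hd : 0 < d) {f : ℤ[X]} (hf : aeval ζ f = 0) :
    cyclotomic d ℤ ∣ f := by
  rw [cyclotomic_eq_minpoly hζ hd]
  exact minpoly.isIntegrallyClosed_dvd (hζ.isIntegral hd) hf

noncomputable def qBinom : ℕ → ℕ → ℤ[X]
  | _, 0 => 1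
  | 0, _ + 1 => 0
  | m + 1, k + 1 => qBinom m k + X ^ (k + 1) * qBinom m (k + 1)

@[simp] lemma qBinom_zero_right (m : ℕ) : qBinom m 0 = 1 := by cases m <;> rfl

lemma qBinom_succ_succ (m k : ℕ) :
    qBinom (m + 1) (k + 1) = qBinom m k + X ^ (k + 1) * qBinom m (k + 1) := rfl

lemma qBinom_eq_zero_of_lt {m k : ℕ} (h : m < k) : qBinom m k = 0 := by
  induction m generalizing k with
  | zero => obtain ⟨k, rfl⟩ := Nat.exists_eq_add_one_of_ne_zero (by omega : k ≠ 0); rfl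
  | succ m ih =>
    obtain ⟨k, rfl⟩ := Nat.exists_eq_add_one_of_ne_zero (by omega : k ≠ 0)
    rw [qBinom_succ_succ, ih (by omega), ih (by omega), mul_zero, add_zero]

@[simp] lemma qBinom_self (m : ℕ) : qBinom m m = 1 := by
  induction m with
  | zero => rfl
  | succ m ih =>
    rw [qBinom_succ_succ, ih, qBinom_eq_zero_of_lt m.lt_succ_self, mul_zero, add_zero]

lemma eval_one_qBinom (m k : ℕ) : (qBinom m k).eval 1 = m.choose k := by
  induction m generalizing k with
  | zero => cases k <;> simp [qBinom]
  | succ m ih =>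
    cases k with
    | zero => simp
    | succ k => simp [qBinom_succ_succ, ih, Nat.choose_succ_succ]

-- This is `(q - 1)^m [m]_q!`; the normalisation cancels in `[s+t, s]_q`.
noncomputable def qFactorial (m : ℕ) : ℤ[X] := ∏ i ∈ Icc 1 m, (X ^ i - 1)

lemma qFactorial_succ (m : ℕ) : qFactorial (m + 1) = qFactorial m * (X ^ (m + 1) - 1) :=
  prod_Icc_succ_top (by omega) _

lemma qFactorial_ne_zero (m : ℕ) : qFactorial m ≠ 0 :=
  prod_ne_zero_iff.mpr fun i hi => by simpa using X_pow_sub_C_ne_zero (mem_Icc.mp hi).1 (1 : ℤ)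

lemma qBinom_add_mul_qFactorial (k t : ℕ) :
    qBinom (k + t) k * qFactorial k * qFactorial t = qFactorial (k + t) := by
  induction k generalizing t with
  | zero => simp [qFactorial]
  | succ k ihk =>
    induction t with
    | zero => simp [qFactorial]
    | succ t iht =>
      have e := ihk (t + 1)
      rw [show k + (t + 1) = k + 1 + t by omega, qFactorial_succ t] at e
      rw [qFactorial_succ k] at iht
      rw [show k + 1 + (t + 1) = k + 1 + t + 1 by omega, qBinom_succ_succ,
        qFactorial_succ (k + 1 + t), qFactorial_succ k, qFactorial_succ t]
      linear_combination (X ^ (k + 1) - 1) * e + X ^ (k + 1) * (X ^ (t + 1) - 1) * iht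

lemma qBinom_symm {m k : ℕ} (h : k ≤ m) : qBinom m (m - k) = qBinom m k := by
  obtain ⟨t, rfl⟩ := Nat.exists_eq_add_of_le h
  have h₁ := qBinom_add_mul_qFactorial k t
  have h₂ := qBinom_add_mul_qFactorial t k
  rw [add_comm t k, ← h₁, mul_right_comm] at h₂
  rw [Nat.add_sub_cancel_left]
  exact mul_right_cancel₀ (mul_ne_zero (qFactorial_ne_zero k) (qFactorial_ne_zero t)) (by
    simpa only [mul_assoc, mul_comm (qFactorial t)] using h₂)

lemma qFactorial_eq_prod_cyclotomic {m B : ℕ} (h : m ≤ B) :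
    qFactorial m = ∏ d ∈ Icc 1 B, cyclotomic d ℤ ^ (m / d) := by
  induction m with
  | zero => simp [qFactorial]
  | succ m ih =>
    have hdiv : (Icc 1 B).filter (· ∣ m + 1) = (m + 1).divisors := by
      ext d
      simp only [mem_filter, mem_Icc, Nat.mem_divisors]
      constructor
      · rintro ⟨-, hd⟩
        exact ⟨hd, m.succ_ne_zero⟩
      · rintro ⟨hd, -⟩
        exact ⟨⟨Nat.pos_of_dvd_of_pos hd m.succ_pos, (Nat.le_of_dvd m.succ_pos hd).trans h⟩,
          hd⟩
    simp_rw [Nat.succ_div, pow_add, prod_mul_distrib, pow_ite, pow_one, pow_zero]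
    rw [qFactorial_succ, ih (by omega), ← prod_filter, hdiv,
      prod_cyclotomic_eq_X_pow_sub_one m.succ_pos]

lemma qBinom_add_eq_prod_cyclotomic (s t : ℕ) :
    qBinom (s + t) s =
      ∏ d ∈ (Icc 1 (s + t)).filter (fun d => d ≤ s % d + t % d), cyclotomic d ℤ := by
  refine mul_right_cancel₀ (mul_ne_zero (qFactorial_ne_zero s) (qFactorial_ne_zero t)) ?_
  rw [← mul_assoc, qBinom_add_mul_qFactorial, qFactorial_eq_prod_cyclotomic le_rfl,
    qFactorial_eq_prod_cyclotomic (Nat.le_add_right s t),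
    qFactorial_eq_prod_cyclotomic (Nat.le_add_left t s), prod_filter, ← prod_mul_distrib,
    ← prod_mul_distrib]
  refine prod_congr rfl fun d hd => ?_
  rw [Nat.add_div (mem_Icc.mp hd).1, pow_add, pow_add, pow_ite, pow_one, pow_zero]
  ring

section RootOfUnity

variable {K : Type*} [Field K] {ζ : K} {d : ℕ}

lemma aeval_qFactorial_ne_zero (hζ : IsPrimitiveRoot ζ d) {m : ℕ} (hm : m < d) :
    aeval ζ (qFactorial m) ≠ 0 := by
  rw [qFactorial, map_prod]
  refine prod_ne_zero_iff.mpr fun i hi => ?_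
  rw [map_sub, map_pow, aeval_X, map_one, sub_ne_zero]
  have := mem_Icc.mp hi
  exact hζ.pow_ne_one_of_pos_of_lt (by omega) (by omega)

lemma aeval_qBinom_eq_zero (hζ : IsPrimitiveRoot ζ d) {j : ℕ} (hj₀ : 0 < j) (hjd : j < d) :
    aeval ζ (qBinom d j) = 0 := by
  have h := congrArg (aeval ζ) (qBinom_add_mul_qFactorial j (d - j))
  have hd : aeval ζ (qFactorial d) = 0 := by
    rw [qFactorial, map_prod]
    exact prod_eq_zero (mem_Icc.mpr ⟨by omega, le_rfl⟩) (by simp [hζ.pow_eq_one])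
  rw [Nat.add_sub_cancel' hjd.le, map_mul, map_mul, hd] at h
  simpa [aeval_qFactorial_ne_zero hζ hjd, aeval_qFactorial_ne_zero hζ (by omega : d - j < d)]
    using h

lemma aeval_qBinom_add (hζ : IsPrimitiveRoot ζ d) (hd : 0 < d) (m k : ℕ) :
    aeval ζ (qBinom (m + d) k) =
      aeval ζ (qBinom m k) + if d ≤ k then aeval ζ (qBinom m (k - d)) else 0 := by
  induction m generalizing k with
  | zero =>
    rw [zero_add]
    rcases Nat.lt_trichotomy k d with h | rfl | h
    · rcases Nat.eq_zero_or_pos k with rfl | hk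
      · simp [hd.ne']
      · rw [aeval_qBinom_eq_zero hζ hk h, qBinom_eq_zero_of_lt hk, if_neg (by omega)]
        simp
    · simp [qBinom_eq_zero_of_lt hd]
    · rw [qBinom_eq_zero_of_lt h, qBinom_eq_zero_of_lt (by omega : 0 < k),
        qBinom_eq_zero_of_lt (by omega : 0 < k - d)]
      simp
  | succ m ih =>
    cases k with
    | zero => simp [hd.ne']
    | succ k =>
      rw [show m + 1 + d = m + d + 1 by omega, qBinom_succ_succ, map_add, map_mul, map_pow,
        aeval_X, ih, ih, qBinom_succ_succ, map_add, map_mul, map_pow, aeval_X]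
      suffices h : ((if d ≤ k then aeval ζ (qBinom m (k - d)) else 0) +
          ζ ^ (k + 1) * if d ≤ k + 1 then aeval ζ (qBinom m (k + 1 - d)) else 0) =
          if d ≤ k + 1 then aeval ζ (qBinom (m + 1) (k + 1 - d)) else 0 by
        linear_combination h
      rcases Nat.lt_trichotomy (k + 1) d with h | h | h
      · simp [show ¬ d ≤ k by omega, show ¬ d ≤ k + 1 by omega]
      · simp [show ¬ d ≤ k by omega, h, hζ.pow_eq_one]
      · obtain ⟨l, rfl⟩ := Nat.exists_eq_add_of_le (show d ≤ k by omega)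
        rw [if_pos (by omega), if_pos (by omega), if_pos (by omega),
          show d + l + 1 - d = l + 1 by omega, Nat.add_sub_cancel_left, qBinom_succ_succ,
          map_add, map_mul, map_pow, aeval_X, show d + l + 1 = (l + 1) + d by omega, pow_add,
          hζ.pow_eq_one]
        ring

lemma aeval_qBinom_mul_add (hζ : IsPrimitiveRoot ζ d) (hd : 0 < d) {R : ℕ} (hR : R < d)
    (u k : ℕ) :
    aeval ζ (qBinom (d * u + R) k) = u.choose (k / d) * aeval ζ (qBinom R (k % d)) := by
  induction u generalizing k with
  | zero =>
    rcases lt_or_ge k d with h | h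
    · simp [Nat.div_eq_of_lt h, Nat.mod_eq_of_lt h]
    · rw [qBinom_eq_zero_of_lt (by omega),
        Nat.choose_eq_zero_of_lt ((Nat.one_le_div_iff hd).mpr h)]
      simp
  | succ u ih =>
    rw [show d * (u + 1) + R = d * u + R + d by ring, aeval_qBinom_add hζ hd, ih]
    split_ifs with h
    · obtain ⟨l, rfl⟩ := Nat.exists_eq_add_of_le h
      rw [Nat.add_sub_cancel_left, ih, add_comm d l, Nat.add_div_right l hd, Nat.add_mod_right,
        Nat.choose_succ_succ']
      push_cast
      ring
    · rw [Nat.div_eq_of_lt (not_le.mp h)]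
      simp

end RootOfUnity

noncomputable def qBinomInt (m : ℕ) (t : ℤ) : ℤ[X] := if 0 ≤ t then qBinom m t.toNat else 0

@[simp] lemma qBinomInt_natCast (m k : ℕ) : qBinomInt m k = qBinom m k := by simp [qBinomInt]

lemma qBinomInt_of_neg {m : ℕ} {t : ℤ} (h : t < 0) : qBinomInt m t = 0 := if_neg (by omega)

lemma qBinomInt_of_lt {m : ℕ} {t : ℤ} (h : (m : ℤ) < t) : qBinomInt m t = 0 := by
  rw [qBinomInt, if_pos (by omega), qBinom_eq_zero_of_lt (by omega)]

lemma qBinomInt_sub (m : ℕ) (t : ℤ) : qBinomInt m (m - t) = qBinomInt m t := by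
  rcases lt_or_ge t 0 with h | h
  · rw [qBinomInt_of_neg h, qBinomInt_of_lt (by omega)]
  rcases le_or_gt t m with h' | h'
  · lift t to ℕ using h
    rw [← Nat.cast_sub (by omega), qBinomInt_natCast, qBinomInt_natCast, qBinom_symm (by omega)]
  · rw [qBinomInt_of_lt h', qBinomInt_of_neg (by omega)]

section QTerm

variable {K : Type*} [Field K] (ζ : K) (n : ℕ)

noncomputable def qTerm (m : ℕ) (t : ℤ) : K :=
  ζ ^ (((n : ℤ) - t) ^ 2) * aeval ζ (qBinomInt m t)

noncomputable def qTermDiff (m : ℕ) (t : ℤ) : K := qTerm ζ n m t - qTerm ζ n m (t - 1)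

variable {ζ n}

lemma qTerm_of_neg {m : ℕ} {t : ℤ} (h : t < 0) : qTerm ζ n m t = 0 := by
  rw [qTerm, qBinomInt_of_neg h, map_zero, mul_zero]

lemma qTerm_of_lt {m : ℕ} {t : ℤ} (h : (m : ℤ) < t) : qTerm ζ n m t = 0 := by
  rw [qTerm, qBinomInt_of_lt h, map_zero, mul_zero]

lemma qTermDiff_of_le {m : ℕ} {t : ℤ} (h : (m : ℤ) + 2 ≤ t) : qTermDiff ζ n m t = 0 := by
  rw [qTermDiff, qTerm_of_lt (by omega), qTerm_of_lt (by omega), sub_zero]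

variable {d R : ℕ} (hζ : IsPrimitiveRoot ζ d) (hd : 0 < d)
include hζ hd

lemma qTerm_sub (hR : (d : ℤ) ∣ 2 * n - R) (t : ℤ) :
    qTerm ζ n R (R - t) = qTerm ζ n R t := by
  rw [qTerm, qTerm, qBinomInt_sub, hζ.zpow_eq_zpow_of_dvd_sub hd]
  rw [show ((n : ℤ) - (R - t)) ^ 2 - (n - t) ^ 2 = (2 * t - R) * (2 * n - R) by ring]
  exact hR.mul_left _

lemma qTermDiff_sub (hR : (d : ℤ) ∣ 2 * n - R) (t : ℤ) :
    qTermDiff ζ n R (R + 1 - t) = -qTermDiff ζ n R t := by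
  rw [qTermDiff, qTermDiff, show (R : ℤ) + 1 - t - 1 = R - t by ring,
    show (R : ℤ) + 1 - t = R - (t - 1) by ring, qTerm_sub hζ hd hR, qTerm_sub hζ hd hR]
  ring

lemma sum_range_qTermDiff_pow_eq_zero [CharZero K] (hR : (d : ℤ) ∣ 2 * n - R) {p : ℕ}
    (hp : Odd p) {c : ℕ} (hc : R + 2 ≤ c) : ∑ v ∈ range c, qTermDiff ζ n R v ^ p = 0 := by
  rw [← sum_subset (range_subset_range.mpr hc) fun v _ hv => by
    rw [qTermDiff_of_le (by simp at hv; omega), zero_pow hp.pos.ne']]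
  have hanti : ∀ v ∈ range (R + 2),
      qTermDiff ζ n R ((R + 2 - 1 - v : ℕ) : ℤ) ^ p = -qTermDiff ζ n R v ^ p := fun v hv => by
    rw [show ((R + 2 - 1 - v : ℕ) : ℤ) = R + 1 - v by simp at hv; omega,
      qTermDiff_sub hζ hd hR, hp.neg_pow]
  have hreflect := sum_range_reflect (fun v => qTermDiff ζ n R v ^ p) (R + 2)
  rw [sum_congr rfl hanti, sum_neg_distrib] at hreflect
  exact self_eq_neg.mp hreflect.symm

lemma qTerm_mul_add_mul_add (hR : R < d) (u q : ℕ) {v : ℕ} (hv : v < d) :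
    qTerm ζ n (d * u + R) ((d * q + v : ℕ) : ℤ) = u.choose q * qTerm ζ n R v := by
  rw [qTerm, qTerm, qBinomInt_natCast, qBinomInt_natCast, aeval_qBinom_mul_add hζ hd hR,
    Nat.mul_add_div hd, Nat.div_eq_of_lt hv, add_zero, Nat.mul_add_mod, Nat.mod_eq_of_lt hv,
    hζ.zpow_eq_zpow_of_dvd_sub hd (b := ((n : ℤ) - v) ^ 2)]
  · ring
  · exact ⟨q * (d * q + 2 * v - 2 * n), by push_cast; ring⟩

lemma qTermDiff_mul_add_mul_add (hR : R + 1 < d) (u q : ℕ) {v : ℕ} (hv : v < d) :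
    qTermDiff ζ n (d * u + R) ((d * q + v : ℕ) : ℤ) = u.choose q * qTermDiff ζ n R v := by
  rw [qTermDiff, qTermDiff, qTerm_mul_add_mul_add hζ hd (by omega) u q hv, mul_sub]
  congr 1
  rcases v with _ | v
  · rw [Nat.cast_zero, zero_sub, qTerm_of_neg (t := -1) (by norm_num), mul_zero]
    rcases q with _ | q
    · exact qTerm_of_neg (by simp)
    · rw [show ((d * (q + 1) + 0 : ℕ) : ℤ) - 1 = ((d * q + (d - 1) : ℕ) : ℤ) by
          push_cast [Nat.cast_sub hd]; ring,
        qTerm_mul_add_mul_add hζ hd (by omega) u q (by omega), qTerm_of_lt (by omega), mul_zero]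
  · rw [show ((d * q + (v + 1) : ℕ) : ℤ) - 1 = ((d * q + v : ℕ) : ℤ) by push_cast; ring,
      qTerm_mul_add_mul_add hζ hd (by omega) u q (by omega), Nat.cast_add_one,
      add_sub_cancel_right]

end QTerm

noncomputable def qCatalan (n k : ℕ) : ℤ[X] :=
  X ^ (k ^ 2) * qBinom (2 * n) (n - k) - X ^ ((k + 1) ^ 2) * qBinom (2 * n) (n + k + 1)

lemma aeval_qCatalan {K : Type*} [Field K] (ζ : K) {n k : ℕ} (hk : k ≤ n) :
    aeval ζ (qCatalan n k) = qTermDiff ζ n (2 * n) ((n - k : ℕ) : ℤ) := by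
  have hlow : ((2 * n : ℕ) : ℤ) - (((n - k : ℕ) : ℤ) - 1) = ((n + k + 1 : ℕ) : ℤ) := by
    omega
  rw [qTermDiff, qTerm, qTerm, ← qBinomInt_sub (2 * n) (((n - k : ℕ) : ℤ) - 1), hlow,
    qBinomInt_natCast, qBinomInt_natCast, show (n : ℤ) - ((n - k : ℕ) : ℤ) = k by omega,
    show (n : ℤ) - (((n - k : ℕ) : ℤ) - 1) = ((k + 1 : ℕ) : ℤ) by omega, ← Nat.cast_pow,
    ← Nat.cast_pow, zpow_natCast, zpow_natCast, qCatalan]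
  simp

theorem cyclotomic_dvd_sum_qCatalan_pow {n a d : ℕ} (r : ℕ) (hd : 0 < d) (ha : a ≤ n)
    (hcarry : d ≤ (n - a) % d + (n + a) % d) :
    cyclotomic d ℤ ∣ ∑ k ∈ Icc a n, qCatalan n k ^ (2 * r + 1) := by
  have hζ := Complex.isPrimitiveRoot_exp d hd.ne'
  refine cyclotomic_dvd_of_aeval_eq_zero hζ hd ?_
  set ζ := Complex.exp (2 * Real.pi * Complex.I / d)
  have hlt₁ := Nat.mod_lt (n - a) hd
  have hlt₂ := Nat.mod_lt (n + a) hd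
  have hsum : (n - a) % d + (n + a) % d = 2 * n % d + d := by
    have h := Nat.add_mod_add_ite (n - a) (n + a) d
    rwa [if_pos hcarry, show n - a + (n + a) = 2 * n by omega, eq_comm] at h
  set R := 2 * n % d
  set u := 2 * n / d
  have hm : 2 * n = d * u + R := (Nat.div_add_mod _ _).symm
  have hR : (d : ℤ) ∣ 2 * n - R :=
    ⟨u, by rw [← Nat.cast_ofNat, ← Nat.cast_mul, hm]; push_cast; ring⟩
  have hRd : R + 1 < d := by omega
  have hlen : n - a + 1 = d * ((n - a) / d) + ((n - a) % d + 1) := by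
    have := Nat.div_add_mod (n - a) d; omega
  have hodd := odd_two_mul_add_one r
  rw [map_sum]
  calc ∑ k ∈ Icc a n, aeval ζ (qCatalan n k ^ (2 * r + 1))
      = ∑ k ∈ Ico a (n + 1), qTermDiff ζ n (2 * n) ((n - k : ℕ) : ℤ) ^ (2 * r + 1) :=
        sum_congr rfl fun k hk => by rw [map_pow, aeval_qCatalan ζ (mem_Icc.mp hk).2]
    _ = ∑ j ∈ range (n - a + 1), qTermDiff ζ n (d * u + R) j ^ (2 * r + 1) := by
        rw [sum_Ico_reflect (fun j => qTermDiff ζ n (2 * n) (j : ℤ) ^ (2 * r + 1)) a le_rfl,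
          Nat.sub_self, ← range_eq_Ico, ← hm, show n + 1 - a = n - a + 1 by omega]
    _ = 0 := by
        rw [hlen]
        refine sum_range_mul_add_eq_zero (a := fun q => (u.choose q : ℂ) ^ (2 * r + 1))
          (fun q v hv => by rw [qTermDiff_mul_add_mul_add hζ hd hRd u q hv, mul_pow])
          (sum_range_qTermDiff_pow_eq_zero hζ hd hR hodd (c := d) (by omega)) _ (by omega)
          (sum_range_qTermDiff_pow_eq_zero hζ hd hR hodd (c := (n - a) % d + 1) (by omega))

theorem qBinom_dvd_sum_qCatalan_pow {n a : ℕ} (r : ℕ) (ha : a ≤ n) :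
    qBinom (2 * n) (n - a) ∣ ∑ k ∈ Icc a n, qCatalan n k ^ (2 * r + 1) := by
  rw [show 2 * n = (n - a) + (n + a) by omega, qBinom_add_eq_prod_cyclotomic]
  refine prod_dvd_of_isRelPrime (fun d hd e he hde => ?_) fun d hd => ?_
  · exact isRelPrime_cyclotomic (mem_Icc.mp (mem_filter.mp hd).1).1
      (mem_Icc.mp (mem_filter.mp he).1).1 hde
  · exact cyclotomic_dvd_sum_qCatalan_pow r (mem_Icc.mp (mem_filter.mp hd).1).1 ha
      (mem_filter.mp hd).2

lemma catA_eq_eval_qCatalan {n k : ℕ} (hk : k ≤ n) : catA n k = (qCatalan n k).eval 1 := by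
  have hsymm : (2 * n + 1).choose (n - k) = (2 * n + 1).choose (n + k + 1) :=
    Nat.choose_symm_of_eq_add (by omega)
  have hpascal :
      (2 * n + 1).choose (n - k) = (2 * n).choose (n - k) + (2 * n).choose (n + k + 1) := by
    rw [hsymm, Nat.choose_succ_succ',
      Nat.choose_symm_of_eq_add (show 2 * n = n + k + (n - k) by omega)]
  have habsorb : ((2 * n).choose (n + k + 1) : ℚ) * (2 * n + 1) =
      (2 * n + 1).choose (n - k) * ((n : ℚ) - k) := by
    have h := Nat.choose_mul_succ_eq (2 * n) (n + k + 1)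
    rw [← hsymm, show 2 * n + 1 - (n + k + 1) = n - k by omega] at h
    rw [← Nat.cast_sub hk]
    exact_mod_cast h
  rw [catA, if_pos hk]
  simp only [qCatalan, eval_sub, eval_mul, eval_pow, eval_X, one_pow, one_mul, eval_one_qBinom]
  rw [hpascal] at habsorb ⊢
  push_cast at habsorb ⊢
  field_simp
  linear_combination 2 * habsorb

theorem stmt8_general (n a r : ℕ) (ha : a ≤ n) :
    ∃ c : ℤ, ∑ k ∈ Finset.Icc a n, catA n k ^ (2 * r + 1) =
      ((2 * n).choose (n - a) : ℚ) * (c : ℚ) := by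
  obtain ⟨c, hc⟩ := qBinom_dvd_sum_qCatalan_pow r ha
  refine ⟨c.eval 1, ?_⟩
  have h := congrArg (fun p : ℤ[X] => ((p.eval 1 : ℤ) : ℚ)) hc
  simp only [eval_finsetSum, eval_pow, eval_mul, eval_one_qBinom, Int.cast_sum, Int.cast_pow,
    Int.cast_mul, Int.cast_natCast] at h
  rw [← h]
  exact sum_congr rfl fun k hk => by rw [catA_eq_eval_qCatalan (mem_Icc.mp hk).2]

/-- Congruence (1.5) of the paper: `C(2n, n-a)` divides the integer
`∑_{k=a}^{n} A_{n,k}^{2r+1}`. -/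
theorem stmt8 (n a r : ℕ) (hn : 0 < n) (ha : a ≤ n) :
    ∃ c : ℤ, ∑ k ∈ Finset.Icc a n, catA n k ^ (2 * r + 1) =
      ((2 * n).choose (n - a) : ℚ) * (c : ℚ) :=
  stmt8_general n a r ha
end
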